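/- For every integer n ≥ 1, the total domination number of the n-dimensional hypercube equals its paired-domination number: γ_t(Q_n) = γ_pr(Q_n). -/

import Mathlib

open SimpleGraph

/-- The complete graph on two vertices. -/
abbrev K2 : SimpleGraph (Fin 2) := ⊤

/-- `S` is a dominating set of `G`: every vertex not in `S` is adjacent to a vertex of `S`. -/
def IsDominatingSet {V : Type*} (G : SimpleGraph V) (S : Finset V) : Prop :=
  ∀ v : V, v ∉ S → ∃ u ∈ S, G.Adj v u

/-- `S` is a total dominating set of `G`: every vertex is adjacent to a vertex of `S`. -/
def IsTotalDominatingSet {V : Type*} (G : SimpleGraph V) (S : Finset V) : Prop :=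
  ∀ v : V, ∃ u ∈ S, G.Adj v u

/-- The domination number of `G`. -/
noncomputable def dominationNumber {V : Type*} (G : SimpleGraph V) : ℕ :=
  sInf {n : ℕ | ∃ S : Finset V, IsDominatingSet G S ∧ S.card = n}

/-- The total domination number of `G`. -/
noncomputable def totalDominationNumber {V : Type*} (G : SimpleGraph V) : ℕ :=
  sInf {n : ℕ | ∃ S : Finset V, IsTotalDominatingSet G S ∧ S.card = n}

/-- `S` is a paired-dominating set of `G`: every vertex is adjacent to a vertex of `S`,
and the subgraph induced by `S` contains a perfect matching, encoded as a fixed-point-free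
involution on `S` pairing each vertex of `S` with an adjacent vertex of `S`. -/
def IsPairedDominatingSet {V : Type*} (G : SimpleGraph V) (S : Finset V) : Prop :=
  (∀ v : V, ∃ u ∈ S, G.Adj v u) ∧
    ∃ f : V → V, ∀ v ∈ S, f v ∈ S ∧ G.Adj v (f v) ∧ f (f v) = v

/-- The paired-domination number of `G`. -/
noncomputable def pairedDominationNumber {V : Type*} (G : SimpleGraph V) : ℕ :=
  sInf {n : ℕ | ∃ S : Finset V, IsPairedDominatingSet G S ∧ S.card = n}

/-- The `n`-dimensional hypercube: vertices are binary strings of length `n`,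
two vertices are adjacent iff they differ in exactly one coordinate. -/
def hypercube (n : ℕ) : SimpleGraph (Fin n → Bool) where
  Adj x y := hammingDist x y = 1
  symm := ⟨fun x y h => by simpa [hammingDist_comm] using h⟩
  loopless := ⟨fun x h => by simp [hammingDist_self] at h⟩

/-! The cube `Q (n + 1)` is the prism `Q n □ K₂`. If `D` dominates a graph `G`, then `D × K₂`
is a paired-dominating set of `G □ K₂`, matched along its `K₂`-edges, so `γ_pr(G □ K₂) ≤ 2 γ(G)`.
Conversely, if `G` is bipartite then so is `G □ K₂`, and each colour class of a total dominating
set of `G □ K₂` projects onto a dominating set of `G`, so `γ_t(G □ K₂) ≥ 2 γ(G)`. Together with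
`γ_t ≤ γ_pr` this squeezes `γ_t(Q n) = γ_pr(Q n) = 2 γ(Q (n - 1))`. -/

open Finset

variable {V W : Type*} {G : SimpleGraph V} {H : SimpleGraph W}

lemma dominationNumber_le_card {S : Finset V} (hS : IsDominatingSet G S) :
    dominationNumber G ≤ #S :=
  Nat.sInf_le ⟨S, hS, rfl⟩

lemma totalDominationNumber_le_card {S : Finset V} (hS : IsTotalDominatingSet G S) :
    totalDominationNumber G ≤ #S :=
  Nat.sInf_le ⟨S, hS, rfl⟩

lemma pairedDominationNumber_le_card {S : Finset V} (hS : IsPairedDominatingSet G S) :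
    pairedDominationNumber G ≤ #S :=
  Nat.sInf_le ⟨S, hS, rfl⟩

lemma exists_isDominatingSet_card_eq [Fintype V] :
    ∃ S, IsDominatingSet G S ∧ #S = dominationNumber G :=
  Nat.sInf_mem (s := {n | ∃ S, IsDominatingSet G S ∧ #S = n})
    ⟨_, univ, fun v hv => absurd (mem_univ v) hv, rfl⟩

lemma exists_isTotalDominatingSet_card_eq (h : ∃ S, IsTotalDominatingSet G S) :
    ∃ S, IsTotalDominatingSet G S ∧ #S = totalDominationNumber G :=
  Nat.sInf_mem (s := {n | ∃ S, IsTotalDominatingSet G S ∧ #S = n})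
    (h.elim fun S hS => ⟨_, S, hS, rfl⟩)

lemma exists_isPairedDominatingSet_card_eq (h : ∃ S, IsPairedDominatingSet G S) :
    ∃ S, IsPairedDominatingSet G S ∧ #S = pairedDominationNumber G :=
  Nat.sInf_mem (s := {n | ∃ S, IsPairedDominatingSet G S ∧ #S = n})
    (h.elim fun S hS => ⟨_, S, hS, rfl⟩)

lemma IsPairedDominatingSet.isTotalDominatingSet {S : Finset V}
    (hS : IsPairedDominatingSet G S) : IsTotalDominatingSet G S :=
  hS.1

lemma totalDominationNumber_le_pairedDominationNumber (h : ∃ S, IsPairedDominatingSet G S) :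
    totalDominationNumber G ≤ pairedDominationNumber G := by
  obtain ⟨S, hS, hcard⟩ := exists_isPairedDominatingSet_card_eq h
  exact hcard ▸ totalDominationNumber_le_card hS.isTotalDominatingSet

namespace SimpleGraph.Iso

lemma isTotalDominatingSet_map (e : G ≃g H) {S : Finset V} (hS : IsTotalDominatingSet G S) :
    IsTotalDominatingSet H (S.map e.toEquiv.toEmbedding) := by
  intro w
  obtain ⟨u, hu, hadj⟩ := hS (e.symm w)
  exact ⟨e u, mem_map_of_mem _ hu, by simpa using e.map_adj_iff.2 hadj⟩

lemma isPairedDominatingSet_map (e : G ≃g H) {S : Finset V} (hS : IsPairedDominatingSet G S) :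
    IsPairedDominatingSet H (S.map e.toEquiv.toEmbedding) := by
  obtain ⟨hdom, f, hf⟩ := hS
  refine ⟨isTotalDominatingSet_map e hdom, e ∘ f ∘ e.symm, ?_⟩
  simp only [mem_map, forall_exists_index, and_imp]
  rintro _ v hv rfl
  obtain ⟨hfv, hadj, hffv⟩ := hf v hv
  exact ⟨⟨f v, hfv, by simp⟩, by simpa using e.map_adj_iff.2 hadj, by simp [hffv]⟩

lemma totalDominationNumber_eq (e : G ≃g H) :
    totalDominationNumber G = totalDominationNumber H := by
  unfold totalDominationNumber
  congr 1
  ext k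
  constructor
  · rintro ⟨S, hS, rfl⟩
    exact ⟨_, isTotalDominatingSet_map e hS, card_map _⟩
  · rintro ⟨S, hS, rfl⟩
    exact ⟨_, isTotalDominatingSet_map e.symm hS, card_map _⟩

lemma pairedDominationNumber_eq (e : G ≃g H) :
    pairedDominationNumber G = pairedDominationNumber H := by
  unfold pairedDominationNumber
  congr 1
  ext k
  constructor
  · rintro ⟨S, hS, rfl⟩
    exact ⟨_, isPairedDominatingSet_map e hS, card_map _⟩
  · rintro ⟨S, hS, rfl⟩
    exact ⟨_, isPairedDominatingSet_map e.symm hS, card_map _⟩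

end SimpleGraph.Iso

lemma SimpleGraph.Coloring.eq_add_one_of_adj (c : G.Coloring (Fin 2)) {v w : V} (h : G.Adj v w) :
    c w = c v + 1 := by
  have hfin : ∀ a b : Fin 2, a ≠ b → b = a + 1 := by decide
  exact hfin _ _ (c.valid h)

def SimpleGraph.Coloring.boxProdK2 (c : G.Coloring (Fin 2)) : (G □ K2).Coloring (Fin 2) :=
  Coloring.mk (fun x => c x.1 + x.2) <| by
    rintro ⟨v, i⟩ ⟨w, j⟩ (⟨hvw, rfl⟩ | ⟨hij, rfl⟩)
    · simpa using c.valid hvw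
    · simpa using hij

@[simp]
lemma SimpleGraph.Coloring.boxProdK2_apply (c : G.Coloring (Fin 2)) (v : V) (i : Fin 2) :
    c.boxProdK2 (v, i) = c v + i :=
  rfl

lemma IsDominatingSet.isPairedDominatingSet_boxProd_K2 {D : Finset V}
    (hD : IsDominatingSet G D) :
    IsPairedDominatingSet (G □ K2) (D ×ˢ univ) := by
  have hswap : ∀ i : Fin 2, i + 1 + 1 = i := by decide
  refine ⟨fun ⟨v, i⟩ => ?_, fun x => (x.1, x.2 + 1), fun ⟨v, i⟩ hv => ?_⟩
  · by_cases hv : v ∈ D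
    · exact ⟨(v, i + 1), by simpa using hv, by simp⟩
    · obtain ⟨u, hu, huv⟩ := hD v hv
      exact ⟨(u, i), by simpa using hu, boxProd_adj_left.2 huv⟩
  · exact ⟨by simpa using hv, by simp, by simp [hswap]⟩

lemma IsTotalDominatingSet.isDominatingSet_image_fst [DecidableEq V] (c : G.Coloring (Fin 2))
    {S : Finset (V × Fin 2)} (hS : IsTotalDominatingSet (G □ K2) S) (p : Fin 2) :
    IsDominatingSet G ({x ∈ S | c.boxProdK2 x = p}.image Prod.fst) := by
  intro v hv
  -- the copy of `v` of colour `p + 1` has a neighbour in `S`, necessarily of colour `p`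
  obtain ⟨u, hu, hadj⟩ := hS (v, c v + p + 1)
  have hup : c.boxProdK2 u = p := by
    rw [c.boxProdK2.eq_add_one_of_adj hadj, Coloring.boxProdK2_apply]
    have hcolour : ∀ a q : Fin 2, a + (a + q + 1) + 1 = q := by decide
    exact hcolour _ _
  have hu' : u.1 ∈ {x ∈ S | c.boxProdK2 x = p}.image Prod.fst :=
    mem_image_of_mem _ (mem_filter.2 ⟨hu, hup⟩)
  rcases boxProd_adj.1 hadj with ⟨hvu, -⟩ | ⟨-, rfl⟩
  · exact ⟨u.1, hu', hvu⟩
  · exact absurd hu' hv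

lemma IsTotalDominatingSet.two_mul_dominationNumber_le_card
    (c : G.Coloring (Fin 2)) {S : Finset (V × Fin 2)} (hS : IsTotalDominatingSet (G □ K2) S) :
    2 * dominationNumber G ≤ #S := by
  classical
  have hclass (p : Fin 2) : dominationNumber G ≤ #{x ∈ S | c.boxProdK2 x = p} :=
    (dominationNumber_le_card (hS.isDominatingSet_image_fst c p)).trans card_image_le
  calc 2 * dominationNumber G = ∑ _p : Fin 2, dominationNumber G := by simp
    _ ≤ ∑ p : Fin 2, #{x ∈ S | c.boxProdK2 x = p} := sum_le_sum fun p _ => hclass p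
    _ = #S := (card_eq_sum_card_fiberwise fun x _ => mem_univ _).symm

theorem totalDominationNumber_boxProd_K2_eq_pairedDominationNumber [Fintype V]
    (hG : G.Colorable 2) :
    totalDominationNumber (G □ K2) = pairedDominationNumber (G □ K2) := by
  obtain ⟨c⟩ := hG
  obtain ⟨D, hD, hDcard⟩ := exists_isDominatingSet_card_eq (G := G)
  have hpaired := hD.isPairedDominatingSet_boxProd_K2
  obtain ⟨S, hS, hScard⟩ :=
    exists_isTotalDominatingSet_card_eq ⟨_, hpaired.isTotalDominatingSet⟩
  refine le_antisymm (totalDominationNumber_le_pairedDominationNumber ⟨_, hpaired⟩) ?_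
  calc pairedDominationNumber (G □ K2) ≤ #(D ×ˢ univ) := pairedDominationNumber_le_card hpaired
    _ = 2 * dominationNumber G := by simp [hDcard, mul_comm]
    _ ≤ #S := hS.two_mul_dominationNumber_le_card c
    _ = totalDominationNumber (G □ K2) := hScard

lemma hammingDist_cons {n : ℕ} {β : Type*} [DecidableEq β] (a b : β) (x y : Fin n → β) :
    hammingDist (Fin.cons a x : Fin (n + 1) → β) (Fin.cons b y) =
      (if a = b then 0 else 1) + hammingDist x y := by
  simp only [hammingDist, Fin.card_filter_univ_succ', Fin.cons_zero, Fin.cons_succ, ite_not]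

def hypercubeBoxProdK2Iso (n : ℕ) : (hypercube n □ K2) ≃g hypercube (n + 1) where
  toEquiv := (Equiv.prodComm _ _).trans
    ((finTwoEquiv.prodCongr (Equiv.refl _)).trans (Fin.consEquiv fun _ => Bool))
  map_rel_iff' := by
    rintro ⟨x, i⟩ ⟨y, j⟩
    change hammingDist (Fin.cons (finTwoEquiv i) x : Fin (n + 1) → Bool)
      (Fin.cons (finTwoEquiv j) y) = 1 ↔ _
    simp only [hypercube, hammingDist_cons, finTwoEquiv.apply_eq_iff_eq, boxProd_adj, top_adj,
      ← hammingDist_eq_zero]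
    split_ifs <;> omega

lemma hypercube_colorable_two : ∀ n, (hypercube n).Colorable 2
  | 0 => ⟨Coloring.mk (fun _ => 0) fun {x y} h => absurd (Subsingleton.elim x y) h.ne⟩
  | n + 1 =>
    let ⟨c⟩ := hypercube_colorable_two n
    Colorable.of_hom (hypercubeBoxProdK2Iso n).symm.toHom ⟨c.boxProdK2⟩

/-- For every `n ≥ 1`, `γ_t(Q_n) = γ_pr(Q_n)`. -/
theorem totalDomination_eq_pairedDomination_hypercube (n : ℕ) (hn : 1 ≤ n) :
    totalDominationNumber (hypercube n) = pairedDominationNumber (hypercube n) := by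
  obtain ⟨m, rfl⟩ := Nat.exists_eq_add_of_le' hn
  rw [← Iso.totalDominationNumber_eq (hypercubeBoxProdK2Iso m),
    ← Iso.pairedDominationNumber_eq (hypercubeBoxProdK2Iso m)]
  exact totalDominationNumber_boxProd_K2_eq_pairedDominationNumber (hypercube_colorable_two m)
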